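/- For any bipartition (ρ;σ) of n, one has (ρ;σ) ≤ Φ̂^C(Φ^C(ρ;σ)) in the interleaved dominance order, with equality if and only if (ρ;σ) is C-distinguished, i.e. (ρ;σ) ∈ Q_n^C. -/

import Mathlib

open Finset

/-- Partial sum of the first `k` terms of a sequence of naturals. -/
def psum (π : ℕ → ℕ) (k : ℕ) : ℕ := ∑ i ∈ Finset.range k, π i

/-- A composition of `n`: almost all terms zero, summing to `n`. -/
def IsComposition (n : ℕ) (π : ℕ → ℕ) : Prop :=
  ∃ N, (∀ i, N ≤ i → π i = 0) ∧ psum π N = n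

/-- Dominance order: `l` dominates `π`. -/
def Dominates (l π : ℕ → ℕ) : Prop := ∀ k, psum π k ≤ psum l k

/-- A partition: weakly decreasing sequence. -/
def IsPartition (π : ℕ → ℕ) : Prop := ∀ i, π (i + 1) ≤ π i

/-- A quasi-partition: `π i ≥ π (i+2)` for all `i`. -/
def IsQuasiPartition (π : ℕ → ℕ) : Prop := ∀ i, π (i + 2) ≤ π i

/-- Interleaving of two sequences: `(ρ₁, σ₁, ρ₂, σ₂, …)` (0-indexed). -/
def interleave (ρ σ : ℕ → ℕ) (i : ℕ) : ℕ :=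
  if i % 2 = 0 then ρ (i / 2) else σ (i / 2)

/-- A bipartition of `n`: a pair of partitions whose interleaving sums to `n`. -/
def IsBipartition (n : ℕ) (ρ σ : ℕ → ℕ) : Prop :=
  IsPartition ρ ∧ IsPartition σ ∧ IsComposition n (interleave ρ σ)

/-- Interleaved dominance order on bipartitions: `(ρ;σ) ≤ (μ;ν)`. -/
def BiLE (ρ σ μ ν : ℕ → ℕ) : Prop :=
  Dominates (interleave μ ν) (interleave ρ σ)

/-- The map `Φ^C` on sequences: replace a consecutive pair `2s < 2t`
by `s+t, s+t` (pointwise description; replacements never overlap for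
quasi-partitions). -/
def phiC (π : ℕ → ℕ) : ℕ → ℕ
  | 0 => if π 0 < π 1 then (π 0 + π 1) / 2 else π 0
  | (j + 1) =>
      if π (j + 1) < π (j + 2) then (π (j + 1) + π (j + 2)) / 2
      else if π j < π (j + 1) then (π j + π (j + 1)) / 2
      else π (j + 1)

/-- `Φ^C` of a bipartition: apply `phiC` to the doubled interleaving. -/
def PhiC (ρ σ : ℕ → ℕ) : ℕ → ℕ := phiC (fun i => 2 * interleave ρ σ i)

/-- Membership in `P^C_{2n}`: partition of `2n` with every odd part of even
multiplicity. -/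
def IsPC (n : ℕ) (l : ℕ → ℕ) : Prop :=
  IsPartition l ∧ IsComposition (2 * n) l ∧
    ∀ a : ℕ, Odd a → Even ({i | l i = a}.ncard)

/-- C-distinguished: `μ i ≥ ν i - 1` and `ν i ≥ μ (i+1) - 1`. -/
def QC (μ ν : ℕ → ℕ) : Prop :=
  ∀ i, ν i ≤ μ i + 1 ∧ μ (i + 1) ≤ ν i + 1

/-- B-distinguished: `μ i ≥ ν i - 2` and `ν i ≥ μ (i+1)`. -/
def QB (μ ν : ℕ → ℕ) : Prop :=
  ∀ i, ν i ≤ μ i + 2 ∧ μ (i + 1) ≤ ν i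

/-- Special: `μ i ≥ ν i - 1` and `ν i ≥ μ (i+1)`. -/
def QS (μ ν : ℕ → ℕ) : Prop :=
  ∀ i, ν i ≤ μ i + 1 ∧ μ (i + 1) ≤ ν i

/-- The condition defining `Q_n^{B,2}`: `μ i ≥ ν i - 2`. -/
def QB2 (μ ν : ℕ → ℕ) : Prop := ∀ i, ν i ≤ μ i + 2

/-- For an antitone sequence, the starting index of the run of equal values
containing index `i`. -/
noncomputable def runStart (l : ℕ → ℕ) (i : ℕ) : ℕ := {j | l i < l j}.ncard

/-- The map `Φ̂^C`, pointwise: halve even parts; replace an (even-length)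
maximal run of an odd part `2k+1` with `k, k+1, k, k+1, …`. -/
noncomputable def hphiC (l : ℕ → ℕ) (i : ℕ) : ℕ :=
  if Even (l i) then l i / 2
  else if Even (i - runStart l i) then l i / 2 else l i / 2 + 1

/-- Partial sums of an integer sequence. -/
def zsum (π : ℕ → ℤ) (k : ℕ) : ℤ := ∑ i ∈ Finset.range k, π i

/-- Dominance order on integer sequences. -/
def ZDominates (l π : ℕ → ℤ) : Prop := ∀ k, zsum π k ≤ zsum l k

/-- The interleaved integer sequence `(2ρ₁+1, 2σ₁−1, 2ρ₂+1, 2σ₂−1, …)`. -/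
def interB (ρ σ : ℕ → ℕ) (i : ℕ) : ℤ :=
  if i % 2 = 0 then 2 * (ρ (i / 2) : ℤ) + 1 else 2 * (σ (i / 2) : ℤ) - 1

/-- The map `Φ^B` on integer sequences: replace a consecutive pair `s < t`
by `(s+t)/2, (s+t)/2` (pointwise description). -/
def phiB (π : ℕ → ℤ) : ℕ → ℤ
  | 0 => if π 0 < π 1 then (π 0 + π 1) / 2 else π 0
  | (j + 1) =>
      if π (j + 1) < π (j + 2) then (π (j + 1) + π (j + 2)) / 2
      else if π j < π (j + 1) then (π j + π (j + 1)) / 2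
      else π (j + 1)

/-- `Φ^B` of a bipartition. -/
def PhiB (ρ σ : ℕ → ℕ) : ℕ → ℤ := phiB (interB ρ σ)

/-- Membership in `P^B_{2n+1}` for an integer sequence: nonnegative, weakly
decreasing, summing to `2n+1`, with every (positive) even part of even
multiplicity. -/
def IsPB (n : ℕ) (l : ℕ → ℤ) : Prop :=
  (∀ i, 0 ≤ l i) ∧ (∀ i, l (i + 1) ≤ l i) ∧
  (∃ N, (∀ i, N ≤ i → l i = 0) ∧ zsum l N = 2 * n + 1) ∧
  ∀ a : ℤ, 0 < a → Even a → Even ({i | l i = a}.ncard)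

/-- Membership in `P^B_{2n+1}` for a natural-number partition. -/
def IsPBN (n : ℕ) (l : ℕ → ℕ) : Prop :=
  IsPartition l ∧ IsComposition (2 * n + 1) l ∧
    ∀ a : ℕ, 0 < a → Even a → Even ({i | l i = a}.ncard)

/-- The map `Φ̂^B`, pointwise (0-indexed, so the paper's index `i` is `j+1`):
an odd part `λ_i` becomes `(λ_i + (−1)^i)/2`; a maximal run of an even part
`2k` starting at (0-indexed) position `s` becomes `k, k, …` if `s` is odd
(paper's `i` even) and `k−1, k+1, k−1, k+1, …` if `s` is even (paper's `i`
odd). -/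
noncomputable def hphiB (l : ℕ → ℕ) (j : ℕ) : ℕ :=
  if Odd (l j) then (if Even j then (l j - 1) / 2 else (l j + 1) / 2)
  else
    if Odd (runStart l j) then l j / 2
    else if Even (j - runStart l j) then l j / 2 - 1 else l j / 2 + 1

/-- First component of the special closure `(ρ;σ)°`. -/
def scRho (ρ σ : ℕ → ℕ) : ℕ → ℕ
  | 0 => if ρ 0 + 1 < σ 0 then (ρ 0 + σ 0) / 2 else ρ 0
  | (i + 1) =>
      if ρ (i + 1) + 1 < σ (i + 1) then (ρ (i + 1) + σ (i + 1)) / 2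
      else if σ i < ρ (i + 1) then (σ i + ρ (i + 1)) / 2
      else ρ (i + 1)

/-- Second component of the special closure `(ρ;σ)°`. -/
def scSigma (ρ σ : ℕ → ℕ) (i : ℕ) : ℕ :=
  if ρ i + 1 < σ i then (ρ i + σ i + 1) / 2
  else if σ i < ρ (i + 1) then (σ i + ρ (i + 1) + 1) / 2
  else σ i

/-- First component of the closure `(ρ;σ)~` into `Q_n^{B,2}`. -/
def tRho (ρ σ : ℕ → ℕ) (i : ℕ) : ℕ :=
  if ρ i + 2 < σ i then (ρ i + σ i + 1) / 2 - 1 else ρ i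

/-- Second component of the closure `(ρ;σ)~` into `Q_n^{B,2}`. -/
def tSigma (ρ σ : ℕ → ℕ) (i : ℕ) : ℕ :=
  if ρ i + 2 < σ i then (ρ i + σ i) / 2 + 1 else σ i

/-- First component of the closure `(ρ;σ)^B` into `Q_n^B`. -/
def bRho (ρ σ : ℕ → ℕ) : ℕ → ℕ
  | 0 => if ρ 0 + 2 < σ 0 then (ρ 0 + σ 0 + 1) / 2 - 1 else ρ 0
  | (i + 1) =>
      if ρ (i + 1) + 2 < σ (i + 1) then (ρ (i + 1) + σ (i + 1) + 1) / 2 - 1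
      else if σ i < ρ (i + 1) then (σ i + ρ (i + 1)) / 2
      else ρ (i + 1)

/-- Second component of the closure `(ρ;σ)^B` into `Q_n^B`. -/
def bSigma (ρ σ : ℕ → ℕ) (i : ℕ) : ℕ :=
  if ρ i + 2 < σ i then (ρ i + σ i) / 2 + 1
  else if σ i < ρ (i + 1) then (σ i + ρ (i + 1) + 1) / 2
  else σ i

/-- First component of the closure `(ρ;σ)^C` into `Q_n^C`. -/
def cRho (ρ σ : ℕ → ℕ) : ℕ → ℕ
  | 0 => if ρ 0 + 1 < σ 0 then (ρ 0 + σ 0) / 2 else ρ 0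
  | (i + 1) =>
      if ρ (i + 1) + 1 < σ (i + 1) then (ρ (i + 1) + σ (i + 1)) / 2
      else if σ i + 1 < ρ (i + 1) then (σ i + ρ (i + 1) + 1) / 2
      else ρ (i + 1)

/-- Second component of the closure `(ρ;σ)^C` into `Q_n^C`. -/
def cSigma (ρ σ : ℕ → ℕ) (i : ℕ) : ℕ :=
  if ρ i + 1 < σ i then (ρ i + σ i + 1) / 2
  else if σ i + 1 < ρ (i + 1) then (σ i + ρ (i + 1)) / 2
  else σ i

/-! Write `π` for the interleaving `(ρ₁, σ₁, ρ₂, σ₂, …)`. As `ρ` and `σ` are partitions, `π` is a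
quasi-partition, so its ascents `π j < π (j + 1)` never overlap. `Φ^C` turns each ascent pair of
`2π` into two copies of `π j + π (j + 1)` and leaves `2π` alone elsewhere; the result is a
partition whose odd parts fill runs of such pairs, so `Φ̂^C` sends an ascent pair back to
`⌊(π j + π (j + 1)) / 2⌋, ⌈(π j + π (j + 1)) / 2⌉` and every other entry back to `π i`. The
partial sums can therefore only grow, and they all stay equal exactly when no ascent exceeds
`1`, which is the condition `QC ρ σ` read along `π`. -/

section QuasiPartition

variable {π : ℕ → ℕ}

lemma phiC_two_mul_zero :
    phiC (2 * π) 0 = if π 0 < π 1 then π 0 + π 1 else 2 * π 0 := by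
  simp only [phiC, Pi.mul_apply, Pi.ofNat_apply]
  split_ifs <;> omega

lemma phiC_two_mul_succ (j : ℕ) :
    phiC (2 * π) (j + 1) = if π (j + 1) < π (j + 2) then π (j + 1) + π (j + 2)
      else if π j < π (j + 1) then π j + π (j + 1) else 2 * π (j + 1) := by
  simp only [phiC, Pi.mul_apply, Pi.ofNat_apply]
  split_ifs <;> omega

lemma phiC_two_mul_of_lt {j : ℕ} (h : π j < π (j + 1)) :
    phiC (2 * π) j = π j + π (j + 1) := by
  cases j with
  | zero => rw [phiC_two_mul_zero, if_pos h]
  | succ k => rw [phiC_two_mul_succ, if_pos h]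

lemma phiC_two_mul_succ_of_lt (hπ : IsQuasiPartition π) {j : ℕ} (h : π j < π (j + 1)) :
    phiC (2 * π) (j + 1) = π j + π (j + 1) := by
  have := hπ j
  rw [phiC_two_mul_succ, if_neg (by omega), if_pos h]

lemma phiC_two_mul_of_not_lt {j : ℕ} (h : ¬ π j < π (j + 1))
    (h' : ∀ k, k + 1 = j → ¬ π k < π (k + 1)) : phiC (2 * π) j = 2 * π j := by
  cases j with
  | zero => rw [phiC_two_mul_zero, if_neg h]
  | succ k => rw [phiC_two_mul_succ, if_neg h, if_neg (h' k rfl)]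

lemma lt_or_lt_of_odd_phiC_two_mul {i : ℕ} (ho : Odd (phiC (2 * π) i)) :
    π i < π (i + 1) ∨ ∃ k, k + 1 = i ∧ π k < π (k + 1) := by
  by_contra h
  simp only [not_or, not_exists, not_and] at h
  rw [phiC_two_mul_of_not_lt h.1 h.2] at ho
  exact Nat.not_odd_iff_even.mpr (even_two_mul _) ho

lemma antitone_phiC_two_mul (hπ : IsQuasiPartition π) : Antitone (phiC (2 * π)) := by
  refine antitone_nat_of_succ_le fun j => ?_
  cases j with
  | zero =>
    have : π 2 ≤ π 0 := hπ 0
    rw [phiC_two_mul_succ, phiC_two_mul_zero]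
    simp only [zero_add]
    split_ifs <;> omega
  | succ k =>
    have : π (k + 2) ≤ π k := hπ k
    have : π (k + 3) ≤ π (k + 1) := hπ (k + 1)
    rw [phiC_two_mul_succ, phiC_two_mul_succ]
    simp only [add_assoc, Nat.reduceAdd]
    split_ifs <;> omega

lemma lt_succ_iff_not_lt_of_odd_phiC_two_mul (hπ : IsQuasiPartition π) {j : ℕ}
    (ho : Odd (phiC (2 * π) (j + 1))) : π (j + 1) < π (j + 2) ↔ ¬ π j < π (j + 1) := by
  refine ⟨fun h h' => absurd (hπ j) (by omega), fun h => ?_⟩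
  obtain h₁ | ⟨k, hk, h₁⟩ := lt_or_lt_of_odd_phiC_two_mul ho
  · exact h₁
  · obtain rfl : k = j := by omega
    exact absurd h₁ h

lemma runStart_eq {l : ℕ → ℕ} (hl : Antitone l) {i r : ℕ} (hri : r ≤ i) (hr : l r = l i)
    (hmin : ∀ j < r, l j ≠ l i) : runStart l i = r := by
  suffices {j | l i < l j} = Set.Iio r by
    rw [runStart, this, ← Finset.coe_range, Set.ncard_coe_finset, Finset.card_range]
  ext j
  simp only [Set.mem_ofPred_eq, Set.mem_Iio]
  constructor
  · intro hj
    by_contra! hrj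
    exact absurd (hl hrj) (by omega)
  · intro hj
    exact lt_of_le_of_ne (hl (by omega)) (hmin j hj).symm

lemma lt_succ_iff_even_sub_runStart (hπ : IsQuasiPartition π) {i : ℕ}
    (ho : Odd (phiC (2 * π) i)) : π i < π (i + 1) ↔ Even (i - runStart (phiC (2 * π)) i) := by
  set L := phiC (2 * π)
  have hL : Antitone L := antitone_phiC_two_mul hπ
  have hex : ∃ r, L r = L i := ⟨i, rfl⟩
  set r := Nat.find hex
  have hri : r ≤ i := Nat.find_le rfl
  have hmin : ∀ j < r, L j ≠ L i := fun j hj => Nat.find_min hex hj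
  rw [runStart_eq hL hri (Nat.find_spec hex) hmin]
  suffices ∀ m, r + m ≤ i → (π (r + m) < π (r + m + 1) ↔ Even m) by
    simpa [Nat.add_sub_cancel' hri] using this (i - r) (by omega)
  intro m
  induction m with
  | zero =>
    intro _
    -- both entries of an ascent pair carry the same value, so no run starts at the second one
    refine iff_of_true ?_ Even.zero
    obtain h | ⟨k, hk, h⟩ := lt_or_lt_of_odd_phiC_two_mul (Nat.find_spec hex ▸ ho)
    · exact h
    · refine absurd ?_ (hmin k (by omega))
      rw [← Nat.find_spec hex, ← hk]
      exact (phiC_two_mul_of_lt h).trans (phiC_two_mul_succ_of_lt hπ h).symm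
  | succ m ih =>
    intro hm
    have hrun : L (r + m + 1) = L i :=
      le_antisymm (Nat.find_spec hex ▸ hL (by omega)) (hL hm)
    rw [← add_assoc, lt_succ_iff_not_lt_of_odd_phiC_two_mul hπ
      (show Odd (L (r + m + 1)) from hrun ▸ ho), ih (by omega),
      Nat.even_add_one]

lemma hphiC_phiC_two_mul_of_lt (hπ : IsQuasiPartition π) {i : ℕ} (h : π i < π (i + 1)) :
    hphiC (phiC (2 * π)) i = (π i + π (i + 1)) / 2 := by
  have hv := phiC_two_mul_of_lt h
  rw [hphiC]
  split_ifs with he hp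
  · rw [hv]
  · rw [hv]
  · exact absurd ((lt_succ_iff_even_sub_runStart hπ (Nat.not_even_iff_odd.mp he)).mp h) hp

lemma hphiC_phiC_two_mul_succ_of_lt (hπ : IsQuasiPartition π) {i : ℕ} (h : π i < π (i + 1)) :
    hphiC (phiC (2 * π)) (i + 1) = (π i + π (i + 1) + 1) / 2 := by
  have hv := phiC_two_mul_succ_of_lt hπ h
  have hn : ¬ π (i + 1) < π (i + 2) := by have := hπ i; omega
  rw [hphiC]
  split_ifs with he hp
  · rw [hv, Nat.even_iff] at *
    omega
  · exact absurd ((lt_succ_iff_even_sub_runStart hπ (Nat.not_even_iff_odd.mp he)).mpr hp) hn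
  · rw [hv, Nat.even_iff] at *
    omega

lemma hphiC_phiC_two_mul_of_not_lt {j : ℕ} (h : ¬ π j < π (j + 1))
    (h' : ∀ k, k + 1 = j → ¬ π k < π (k + 1)) : hphiC (phiC (2 * π)) j = π j := by
  rw [hphiC, phiC_two_mul_of_not_lt h h', if_pos (even_two_mul _)]
  omega

/-- By how much the partial sums of `Φ̂^C (Φ^C π)` exceed those of `π`: a cut through the middle
of an ascent `π j < π (j + 1)` gains `⌊(π (j + 1) - π j) / 2⌋`, every other cut gains nothing. -/
def ascentExcess (π : ℕ → ℕ) : ℕ → ℕ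
  | 0 => 0
  | j + 1 => if π j < π (j + 1) then (π (j + 1) - π j) / 2 else 0

lemma psum_succ (f : ℕ → ℕ) (k : ℕ) : psum f (k + 1) = psum f k + f k :=
  Finset.sum_range_succ f k

lemma psum_hphiC_phiC_two_mul (hπ : IsQuasiPartition π) (k : ℕ) :
    psum (hphiC (phiC (2 * π))) k = psum π k + ascentExcess π k := by
  induction k with
  | zero => rfl
  | succ k ih =>
    rw [psum_succ, psum_succ, ih]
    by_cases hk : π k < π (k + 1)
    · have hprev : ascentExcess π k = 0 := by
        cases k with
        | zero => rfl
        | succ j => exact if_neg (by have : π (j + 1 + 1) ≤ π j := hπ j; omega)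
      rw [hphiC_phiC_two_mul_of_lt hπ hk, hprev, ascentExcess, if_pos hk]
      omega
    · cases k with
      | zero =>
        rw [hphiC_phiC_two_mul_of_not_lt hk (by omega)]
        simp [ascentExcess, hk]
      | succ j =>
        rw [ascentExcess, ascentExcess, if_neg hk]
        by_cases hj : π j < π (j + 1)
        · rw [hphiC_phiC_two_mul_succ_of_lt hπ hj, if_pos hj]
          omega
        · rw [hphiC_phiC_two_mul_of_not_lt hk fun _ hk => Nat.succ_injective hk ▸ hj, if_neg hj]
          omega

lemma dominates_hphiC_phiC_two_mul (hπ : IsQuasiPartition π) :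
    Dominates (hphiC (phiC (2 * π))) π := fun k =>
  (psum_hphiC_phiC_two_mul hπ k).symm ▸ Nat.le_add_right _ _

lemma eq_hphiC_phiC_two_mul_iff (hπ : IsQuasiPartition π) :
    (∀ i, π i = hphiC (phiC (2 * π)) i) ↔ ∀ j, π (j + 1) ≤ π j + 1 := by
  constructor
  · intro h j
    by_contra! hj
    have := h j
    rw [hphiC_phiC_two_mul_of_lt hπ (by omega)] at this
    omega
  · intro h i
    by_cases hi : π i < π (i + 1)
    · rw [hphiC_phiC_two_mul_of_lt hπ hi]
      have := h i
      omega
    · rcases i with _ | j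
      · rw [hphiC_phiC_two_mul_of_not_lt hi (by omega)]
      · by_cases hj : π j < π (j + 1)
        · rw [hphiC_phiC_two_mul_succ_of_lt hπ hj]
          have := h j
          omega
        · rw [hphiC_phiC_two_mul_of_not_lt hi fun _ hk => Nat.succ_injective hk ▸ hj]

end QuasiPartition

section Interleave

variable {ρ σ : ℕ → ℕ}

@[simp]
lemma interleave_two_mul (m : ℕ) : interleave ρ σ (2 * m) = ρ m := by
  simp [interleave]

@[simp]
lemma interleave_two_mul_add_one (m : ℕ) : interleave ρ σ (2 * m + 1) = σ m := by
  simp [interleave, Nat.mul_add_div]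

lemma isQuasiPartition_interleave (hρ : IsPartition ρ) (hσ : IsPartition σ) :
    IsQuasiPartition (interleave ρ σ) := by
  intro j
  have h2 : (j + 2) / 2 = j / 2 + 1 := by omega
  simp only [interleave, Nat.add_mod_right, h2]
  split_ifs
  exacts [hρ _, hσ _]

lemma qc_iff_interleave :
    QC ρ σ ↔ ∀ j, interleave ρ σ (j + 1) ≤ interleave ρ σ j + 1 := by
  constructor
  · intro h j
    obtain ⟨m, rfl | rfl⟩ := Nat.even_or_odd' j
    · simpa using (h m).1
    · simpa [show 2 * m + 1 + 1 = 2 * (m + 1) by ring] using (h m).2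
  · intro h i
    exact ⟨by simpa using h (2 * i),
      by simpa [show 2 * i + 1 + 1 = 2 * (i + 1) by ring] using h (2 * i + 1)⟩

end Interleave

/-- `(ρ;σ) ≤ Φ̂^C(Φ^C(ρ;σ))`, with equality iff `(ρ;σ)` is
C-distinguished. -/
theorem le_hphiC_phiC (n : ℕ) (ρ σ : ℕ → ℕ) (h : IsBipartition n ρ σ) :
    Dominates (hphiC (PhiC ρ σ)) (interleave ρ σ) ∧
      ((∀ i, interleave ρ σ i = hphiC (PhiC ρ σ) i) ↔ QC ρ σ) := by
  obtain ⟨hρ, hσ, -⟩ := h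
  have hπ := isQuasiPartition_interleave hρ hσ
  exact ⟨dominates_hphiC_phiC_two_mul hπ,
    (eq_hphiC_phiC_two_mul_iff hπ).trans qc_iff_interleave.symm⟩
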